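/- Strengthened double-intersection rule, special case: let A, B, C, D be compact convex planar sets, pairwise intersecting, with A∩B∩C ≠ ∅ and A∩B∩D ≠ ∅, but A∩C∩D = ∅ and B∩C∩D = ∅. Then the orientation of (A,C,D) equals the orientation of (B,C,D). -/

import Mathlib

/-!
`det2 x y z` vanishes only on collinear triples, and a collinear triple with `x ∈ C ∩ D`,
`y ∈ A ∩ D`, `z ∈ A ∩ C` has one point between the other two, which by convexity puts that point
in `A ∩ C ∩ D`. So when `A ∩ C ∩ D = ∅`, `det2` has no zero on the convex (hence connected) set
`(C ∩ D) × (A ∩ D) × (A ∩ C)` and its sign is constant there. A point of `A ∩ B ∩ D` lies in both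
`A ∩ D` and `B ∩ D`, a point of `A ∩ B ∩ C` in both `A ∩ C` and `B ∩ C`; the triple they form with
a point of `C ∩ D` links the orientation of `(A, C, D)` to that of `(B, C, D)`.
-/

noncomputable def det2 (p q r : ℝ × ℝ) : ℝ :=
  (q.1 - p.1) * (r.2 - p.2) - (q.2 - p.2) * (r.1 - p.1)

noncomputable def ptOrient (p q r : ℝ × ℝ) : ℝ := Real.sign (det2 p q r)

theorem IsPreconnected.sign_eq_sign {X : Type*} [TopologicalSpace X] {s : Set X}
    (hs : IsPreconnected s) {f : X → ℝ} (hf : ContinuousOn f s) (hf0 : ∀ x ∈ s, f x ≠ 0)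
    {a b : X} (ha : a ∈ s) (hb : b ∈ s) : Real.sign (f a) = Real.sign (f b) := by
  have no_sign_change {a b : X} (ha : a ∈ s) (hb : b ∈ s) (hfa : f a ≤ 0) (hfb : 0 ≤ f b) :
      False := by
    obtain ⟨x, hx, hfx⟩ := hs.intermediate_value₂ ha hb hf continuousOn_const hfa hfb
    exact hf0 x hx hfx
  rcases (hf0 a ha).lt_or_gt with hfa | hfa <;> rcases (hf0 b hb).lt_or_gt with hfb | hfb
  · rw [Real.sign_of_neg hfa, Real.sign_of_neg hfb]
  · exact (no_sign_change ha hb hfa.le hfb.le).elim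
  · exact (no_sign_change hb ha hfb.le hfa.le).elim
  · rw [Real.sign_of_pos hfa, Real.sign_of_pos hfb]

theorem collinear_of_det2_eq_zero {p q r : ℝ × ℝ} (h : det2 p q r = 0) :
    Collinear ℝ ({p, q, r} : Set (ℝ × ℝ)) := by
  by_cases hqp : q = p
  · rw [hqp, Set.insert_eq_of_mem (Set.mem_insert p {r})]
    exact collinear_pair ℝ p r
  have hN : (q.1 - p.1) ^ 2 + (q.2 - p.2) ^ 2 ≠ 0 := by
    intro h0
    have h1 : q.1 - p.1 = 0 := by nlinarith [sq_nonneg (q.1 - p.1), sq_nonneg (q.2 - p.2)]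
    have h2 : q.2 - p.2 = 0 := by nlinarith [sq_nonneg (q.1 - p.1), sq_nonneg (q.2 - p.2)]
    exact hqp (Prod.ext (sub_eq_zero.mp h1) (sub_eq_zero.mp h2))
  -- `r - p` is its own projection onto `q - p`, as `det2 p q r = 0` says the two are parallel.
  have hr : r = AffineMap.lineMap p q (((q.1 - p.1) * (r.1 - p.1) + (q.2 - p.2) * (r.2 - p.2)) /
      ((q.1 - p.1) ^ 2 + (q.2 - p.2) ^ 2)) := by
    simp only [det2] at h
    rw [AffineMap.lineMap_apply]
    ext <;> simp only [vsub_eq_sub, vadd_eq_add, Prod.fst_add, Prod.snd_add, Prod.smul_fst,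
      Prod.smul_snd, Prod.fst_sub, Prod.snd_sub, smul_eq_mul] <;> field_simp
    · linear_combination (p.2 - q.2) * h
    · linear_combination (q.1 - p.1) * h
  rw [hr, Set.pair_comm q, Set.insert_comm p]
  exact collinear_insert_of_mem_affineSpan_pair (AffineMap.lineMap_mem_affineSpan_pair _ _ _)

theorem det2_ne_zero_of_inter_eq_empty {A C D : Set (ℝ × ℝ)}
    (hA : Convex ℝ A) (hC : Convex ℝ C) (hD : Convex ℝ D) (hACD : A ∩ C ∩ D = ∅)
    {x y z : ℝ × ℝ} (hx : x ∈ C ∩ D) (hy : y ∈ A ∩ D) (hz : z ∈ A ∩ C) : det2 x y z ≠ 0 := by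
  intro h
  have not_mem {w : ℝ × ℝ} (hwA : w ∈ A) (hwC : w ∈ C) (hwD : w ∈ D) : False :=
    hACD.subset ⟨⟨hwA, hwC⟩, hwD⟩
  rcases (collinear_of_det2_eq_zero h).wbtw_or_wbtw_or_wbtw with hw | hw | hw
  · exact not_mem hy.1 (hC.segment_subset hx.1 hz.2 (mem_segment_iff_wbtw.mpr hw)) hy.2
  · exact not_mem hz.1 hz.2 (hD.segment_subset hy.2 hx.2 (mem_segment_iff_wbtw.mpr hw))
  · exact not_mem (hA.segment_subset hz.1 hy.1 (mem_segment_iff_wbtw.mpr hw)) hx.1 hx.2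

theorem ptOrient_eq_of_inter_eq_empty {A C D : Set (ℝ × ℝ)}
    (hA : Convex ℝ A) (hC : Convex ℝ C) (hD : Convex ℝ D) (hACD : A ∩ C ∩ D = ∅)
    {x y z x' y' z' : ℝ × ℝ} (hx : x ∈ C ∩ D) (hy : y ∈ A ∩ D) (hz : z ∈ A ∩ C)
    (hx' : x' ∈ C ∩ D) (hy' : y' ∈ A ∩ D) (hz' : z' ∈ A ∩ C) :
    ptOrient x y z = ptOrient x' y' z' := by
  let S := (C ∩ D) ×ˢ (A ∩ D) ×ˢ (A ∩ C)
  have hS : Convex ℝ S := (hC.inter hD).prod ((hA.inter hD).prod (hA.inter hC))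
  have hcont : Continuous fun t : (ℝ × ℝ) × (ℝ × ℝ) × (ℝ × ℝ) => det2 t.1 t.2.1 t.2.2 := by
    unfold det2
    fun_prop
  have hf0 : ∀ t ∈ S, det2 t.1 t.2.1 t.2.2 ≠ 0 := fun _ ⟨ht₁, ht₂, ht₃⟩ =>
    det2_ne_zero_of_inter_eq_empty hA hC hD hACD ht₁ ht₂ ht₃
  exact hS.isPreconnected.sign_eq_sign hcont.continuousOn hf0
    (a := (x, y, z)) (b := (x', y', z')) ⟨hx, hy, hz⟩ ⟨hx', hy', hz'⟩

theorem stmt_9_general (A B C D : Set (ℝ × ℝ))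
    (hA : Convex ℝ A) (hB : Convex ℝ B) (hC : Convex ℝ C) (hD : Convex ℝ D)
    (hABC : (A ∩ B ∩ C).Nonempty) (hABD : (A ∩ B ∩ D).Nonempty)
    (hACD : A ∩ C ∩ D = ∅) (hBCD : B ∩ C ∩ D = ∅) :
    ∀ x ∈ C ∩ D, ∀ y ∈ A ∩ D, ∀ z ∈ A ∩ C,
      ∀ x' ∈ C ∩ D, ∀ y' ∈ B ∩ D, ∀ z' ∈ B ∩ C,
        ptOrient x y z = ptOrient x' y' z' := by
  intro x hx y hy z hz x' hx' y' hy' z' hz'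
  obtain ⟨w, ⟨hwA, hwB⟩, hwC⟩ := hABC
  obtain ⟨v, ⟨hvA, hvB⟩, hvD⟩ := hABD
  calc ptOrient x y z
      = ptOrient x' v w := ptOrient_eq_of_inter_eq_empty hA hC hD hACD hx hy hz hx'
          ⟨hvA, hvD⟩ ⟨hwA, hwC⟩
    _ = ptOrient x' y' z' := ptOrient_eq_of_inter_eq_empty hB hC hD hBCD hx' ⟨hvB, hvD⟩
          ⟨hwB, hwC⟩ hx' hy' hz'

theorem stmt_9 (A B C D : Set (ℝ × ℝ))
    (hAc : IsCompact A) (hBc : IsCompact B) (hCc : IsCompact C) (hDc : IsCompact D)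
    (hA : Convex ℝ A) (hB : Convex ℝ B) (hC : Convex ℝ C) (hD : Convex ℝ D)
    (hAB : (A ∩ B).Nonempty) (hAC : (A ∩ C).Nonempty) (hAD : (A ∩ D).Nonempty)
    (hBC : (B ∩ C).Nonempty) (hBD : (B ∩ D).Nonempty) (hCD : (C ∩ D).Nonempty)
    (hABC : (A ∩ B ∩ C).Nonempty) (hABD : (A ∩ B ∩ D).Nonempty)
    (hACD : A ∩ C ∩ D = ∅) (hBCD : B ∩ C ∩ D = ∅) :
    ∀ x ∈ C ∩ D, ∀ y ∈ A ∩ D, ∀ z ∈ A ∩ C,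
      ∀ x' ∈ C ∩ D, ∀ y' ∈ B ∩ D, ∀ z' ∈ B ∩ C,
        ptOrient x y z = ptOrient x' y' z' :=
  stmt_9_general A B C D hA hB hC hD hABC hABD hACD hBCD
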